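/- Let X be a real m×n matrix, 0 < r ≤ min(m,n), and λ ≥ 0. Then the infimum over m×r matrices A and n×r matrices B of (1/2)‖X − ABᵀ‖_F² + (λ/2)(‖A‖_F² + ‖B‖_F²) equals the infimum over m×n matrices Z with rank(Z) ≤ r of (1/2)‖X − Z‖_F² + λ‖Z‖_*. -/

import Mathlib

/-!
Let `Z = U Σ Vᵀ` be a singular value decomposition, with `U = Z V Σ⁻¹` a partial isometry.
For any factorization `Z = A Bᵀ`,
`‖Z‖_* = tr (Uᵀ A Bᵀ V) = ⟪Aᵀ U, Bᵀ V⟫ ≤ (‖Aᵀ U‖² + ‖Bᵀ V‖²) / 2 ≤ (‖A‖² + ‖B‖²) / 2`,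
so every value of the factored objective dominates a value of the rank-restricted one.
Conversely, if `rank Z ≤ r` then at most `r` singular values are nonzero, and `Z` has a balanced
factorization `Z = A Bᵀ` through `r` columns with `‖A‖² = ‖B‖² = ‖Z‖_*`, on which the two
objectives agree.
-/

noncomputable section

open Matrix

/-- Squared Frobenius norm of a real matrix. -/
def frobSq {m n : ℕ} (M : Matrix (Fin m) (Fin n) ℝ) : ℝ := ∑ i, ∑ j, (M i j) ^ 2

/-- Nuclear norm: sum of the singular values, i.e. of the square roots of the
eigenvalues of `Zᴴ * Z`. -/
def nuclearNorm {m n : ℕ} (Z : Matrix (Fin m) (Fin n) ℝ) : ℝ :=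
  ∑ i, Real.sqrt ((Matrix.isHermitian_conjTranspose_mul_self Z).eigenvalues i)

section Frobenius

variable {m n k : ℕ}

lemma frobSq_nonneg (M : Matrix (Fin m) (Fin n) ℝ) : 0 ≤ frobSq M := by
  unfold frobSq; positivity

lemma frobSq_eq_trace (M : Matrix (Fin m) (Fin n) ℝ) : frobSq M = (Mᵀ * M).trace := by
  simp only [frobSq, trace, diag, mul_apply, transpose_apply, sq]
  exact Finset.sum_comm

lemma frobSq_transpose (M : Matrix (Fin m) (Fin n) ℝ) : frobSq Mᵀ = frobSq M := by
  simp only [frobSq, transpose_apply]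
  exact Finset.sum_comm

lemma trace_transpose_mul_le (C E : Matrix (Fin m) (Fin n) ℝ) :
    (Cᵀ * E).trace ≤ (frobSq C + frobSq E) / 2 := by
  have hsymm : (Eᵀ * C).trace = (Cᵀ * E).trace := by
    rw [← trace_transpose, transpose_mul, transpose_transpose]
  have key : frobSq (C - E) = frobSq C + frobSq E - 2 * (Cᵀ * E).trace := by
    rw [frobSq_eq_trace, transpose_sub, Matrix.sub_mul, Matrix.mul_sub, Matrix.mul_sub, trace_sub,
      trace_sub, trace_sub, hsymm, frobSq_eq_trace, frobSq_eq_trace]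
    ring
  linarith [frobSq_nonneg (C - E)]

lemma frobSq_mul_eq_trace (C : Matrix (Fin m) (Fin n) ℝ) (V : Matrix (Fin n) (Fin k) ℝ) :
    frobSq (C * V) = (Cᵀ * C * (V * Vᵀ)).trace := by
  rw [frobSq_eq_trace, transpose_mul, Matrix.mul_assoc, trace_mul_comm]
  simp only [Matrix.mul_assoc]

lemma frobSq_eq_add_of_mul_transpose_mul_self {U : Matrix (Fin n) (Fin k) ℝ}
    (hU : U * Uᵀ * U = U) (C : Matrix (Fin m) (Fin n) ℝ) :
    frobSq C = frobSq (C * U) + frobSq (C * (1 - U * Uᵀ)) := by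
  have hproj : (1 - U * Uᵀ) * (1 - U * Uᵀ)ᵀ = 1 - U * Uᵀ := by
    rw [transpose_sub, transpose_one, transpose_mul, transpose_transpose, sub_mul, mul_sub,
      mul_sub, ← Matrix.mul_assoc (U * Uᵀ) U Uᵀ, hU]
    simp
  rw [frobSq_mul_eq_trace, frobSq_mul_eq_trace, hproj, ← trace_add, ← Matrix.mul_add,
    add_sub_cancel, Matrix.mul_one, frobSq_eq_trace]

lemma frobSq_mul_le_of_mul_transpose_mul_self {U : Matrix (Fin n) (Fin k) ℝ}
    (hU : U * Uᵀ * U = U) (C : Matrix (Fin m) (Fin n) ℝ) : frobSq (C * U) ≤ frobSq C := by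
  rw [frobSq_eq_add_of_mul_transpose_mul_self hU C]
  linarith [frobSq_nonneg (C * (1 - U * Uᵀ))]

lemma frobSq_mul_diagonal_mul {M : Matrix (Fin m) (Fin n) ℝ}
    {P : Matrix (Fin n) (Fin k) ℝ} {c e : Fin n → ℝ} (hM : Mᵀ * M = diagonal c)
    (hP : P * Pᵀ = diagonal e) (d : Fin n → ℝ) :
    frobSq (M * diagonal d * P) = ∑ i, d i ^ 2 * c i * e i := by
  rw [frobSq_mul_eq_trace, hP, transpose_mul, diagonal_transpose]
  simp only [Matrix.mul_assoc]
  rw [← Matrix.mul_assoc Mᵀ M, hM]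
  simp only [diagonal_mul_diagonal, trace_diagonal]
  congr 1
  funext i
  ring

end Frobenius

namespace Matrix

lemma exists_mul_transpose_eq_diagonal_ite {ι κ R : Type*} [Fintype κ] [DecidableEq ι]
    [DecidableEq κ] [NonAssocSemiring R] (p : ι → Prop) [DecidablePred p] [Fintype {i // p i}]
    (h : Fintype.card {i // p i} ≤ Fintype.card κ) :
    ∃ P : Matrix ι κ R, P * Pᵀ = diagonal fun i => if p i then 1 else 0 := by
  obtain ⟨e⟩ := Function.Embedding.nonempty_of_card_le h
  refine ⟨of fun i k => if hi : p i then (if e ⟨i, hi⟩ = k then 1 else 0) else 0, ?_⟩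
  ext i j
  rcases eq_or_ne i j with rfl | hij
  · by_cases hi : p i <;> simp [mul_apply, hi]
  · by_cases hi : p i <;> by_cases hj : p j <;>
      simp [mul_apply, hi, hj, e.injective.eq_iff, hij]

section SingularValues

variable {m n : Type*} [Fintype m] [Fintype n] [DecidableEq n] (Z : Matrix m n ℝ)

def singularValue (i : n) : ℝ := √((isHermitian_conjTranspose_mul_self Z).eigenvalues i)

def rightSingularVectors : Matrix n n ℝ :=
  (isHermitian_conjTranspose_mul_self Z).eigenvectorUnitary

/-- Columns belonging to a zero singular value are zero, because `0⁻¹ = 0`. -/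
def leftSingularVectors : Matrix m n ℝ :=
  Z * Z.rightSingularVectors * diagonal fun i => (Z.singularValue i)⁻¹

lemma singularValue_nonneg (i : n) : 0 ≤ Z.singularValue i := Real.sqrt_nonneg _

lemma singularValue_sq (i : n) :
    Z.singularValue i ^ 2 = (isHermitian_conjTranspose_mul_self Z).eigenvalues i :=
  Real.sq_sqrt ((posSemidef_conjTranspose_mul_self Z).eigenvalues_nonneg i)

lemma rightSingularVectors_mul_transpose :
    Z.rightSingularVectors * Z.rightSingularVectorsᵀ = 1 := by
  simpa [star_eq_conjTranspose, rightSingularVectors] using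
    mem_unitaryGroup_iff.mp (isHermitian_conjTranspose_mul_self Z).eigenvectorUnitary.2

lemma transpose_rightSingularVectors_mul :
    Z.rightSingularVectorsᵀ * Z.rightSingularVectors = 1 := by
  simpa [star_eq_conjTranspose, rightSingularVectors] using
    mem_unitaryGroup_iff'.mp (isHermitian_conjTranspose_mul_self Z).eigenvectorUnitary.2

lemma transpose_mul_rightSingularVectors_mul :
    (Z * Z.rightSingularVectors)ᵀ * (Z * Z.rightSingularVectors) =
      diagonal fun i => Z.singularValue i ^ 2 := by
  have h := (isHermitian_conjTranspose_mul_self Z).conjStarAlgAut_star_eigenvectorUnitary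
  rw [Unitary.conjStarAlgAut_star_apply] at h
  simp only [singularValue_sq, transpose_mul, Matrix.mul_assoc]
  simp only [star_eq_conjTranspose, conjTranspose_eq_transpose_of_trivial,
    Function.comp_def, RCLike.ofReal_real_eq_id, id, Matrix.mul_assoc] at h
  exact h

lemma mul_rightSingularVectors_mul_diagonal_mul_inv :
    Z * Z.rightSingularVectors * diagonal (fun i => Z.singularValue i * (Z.singularValue i)⁻¹) =
      Z * Z.rightSingularVectors := by
  ext j i
  rw [mul_diagonal]
  rcases eq_or_ne (Z.singularValue i) 0 with h | h
  · -- the `i`-th column of `Z * V` has squared norm `σ i ^ 2 = 0`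
    have hcol := congr_fun₂ Z.transpose_mul_rightSingularVectors_mul i i
    simp only [mul_apply (M := (Z * Z.rightSingularVectors)ᵀ), transpose_apply,
      diagonal_apply_eq, h] at hcol
    have hji := (Finset.sum_eq_zero_iff_of_nonneg fun j _ => mul_self_nonneg _).mp
      (by simpa using hcol) j (Finset.mem_univ j)
    simp [h, mul_self_eq_zero.mp hji]
  · simp [h]

lemma transpose_leftSingularVectors_mul_self :
    Z.leftSingularVectorsᵀ * Z.leftSingularVectors =
      diagonal fun i => Z.singularValue i * (Z.singularValue i)⁻¹ := by
  rw [leftSingularVectors, transpose_mul, diagonal_transpose, Matrix.mul_assoc,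
    ← Matrix.mul_assoc (Z * Z.rightSingularVectors)ᵀ, transpose_mul_rightSingularVectors_mul,
    diagonal_mul_diagonal, diagonal_mul_diagonal]
  congr 1
  funext i
  rcases eq_or_ne (Z.singularValue i) 0 with h | h
  · simp [h]
  · field_simp

lemma leftSingularVectors_mul_transpose_mul_self :
    Z.leftSingularVectors * Z.leftSingularVectorsᵀ * Z.leftSingularVectors =
      Z.leftSingularVectors := by
  rw [Matrix.mul_assoc, transpose_leftSingularVectors_mul_self, leftSingularVectors,
    Matrix.mul_assoc, diagonal_mul_diagonal]
  congr 3
  funext i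
  rcases eq_or_ne (Z.singularValue i) 0 with h | h
  · simp [h]
  · field_simp

lemma transpose_leftSingularVectors_mul_mul_rightSingularVectors :
    Z.leftSingularVectorsᵀ * Z * Z.rightSingularVectors = diagonal Z.singularValue := by
  rw [Matrix.mul_assoc, leftSingularVectors, transpose_mul, diagonal_transpose, Matrix.mul_assoc,
    transpose_mul_rightSingularVectors_mul, diagonal_mul_diagonal]
  congr 1
  funext i
  rcases eq_or_ne (Z.singularValue i) 0 with h | h
  · simp [h]
  · field_simp

lemma leftSingularVectors_mul_diagonal_mul_transpose :
    Z.leftSingularVectors * diagonal Z.singularValue * Z.rightSingularVectorsᵀ = Z := by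
  have hσ : (fun i => (Z.singularValue i)⁻¹ * Z.singularValue i) =
      fun i => Z.singularValue i * (Z.singularValue i)⁻¹ := funext fun i => mul_comm _ _
  rw [leftSingularVectors, Matrix.mul_assoc (Z * Z.rightSingularVectors), diagonal_mul_diagonal,
    hσ, mul_rightSingularVectors_mul_diagonal_mul_inv, Matrix.mul_assoc,
    rightSingularVectors_mul_transpose, Matrix.mul_one]

lemma card_singularValue_ne_zero : Fintype.card {i // Z.singularValue i ≠ 0} = Z.rank := by
  rw [← rank_conjTranspose_mul_self,
    (isHermitian_conjTranspose_mul_self Z).rank_eq_card_non_zero_eigs]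
  refine Fintype.card_congr (Equiv.subtypeEquivRight fun i => ?_)
  rw [singularValue, ne_eq,
    Real.sqrt_eq_zero ((posSemidef_conjTranspose_mul_self Z).eigenvalues_nonneg i)]

end SingularValues

end Matrix

lemma nuclearNorm_eq_sum_singularValue {m n : ℕ} (Z : Matrix (Fin m) (Fin n) ℝ) :
    nuclearNorm Z = ∑ i, Z.singularValue i := rfl

lemma nuclearNorm_mul_transpose_le {m n r : ℕ} (A : Matrix (Fin m) (Fin r) ℝ)
    (B : Matrix (Fin n) (Fin r) ℝ) : nuclearNorm (A * Bᵀ) ≤ (frobSq A + frobSq B) / 2 := by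
  have hV : (A * Bᵀ).rightSingularVectors * (A * Bᵀ).rightSingularVectorsᵀ *
      (A * Bᵀ).rightSingularVectors = (A * Bᵀ).rightSingularVectors := by
    rw [rightSingularVectors_mul_transpose, Matrix.one_mul]
  calc nuclearNorm (A * Bᵀ)
      = ((Aᵀ * (A * Bᵀ).leftSingularVectors)ᵀ * (Bᵀ * (A * Bᵀ).rightSingularVectors)).trace := by
        rw [nuclearNorm_eq_sum_singularValue, ← trace_diagonal,
          ← transpose_leftSingularVectors_mul_mul_rightSingularVectors, transpose_mul,
          transpose_transpose]
        simp only [Matrix.mul_assoc]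
    _ ≤ (frobSq (Aᵀ * (A * Bᵀ).leftSingularVectors) +
          frobSq (Bᵀ * (A * Bᵀ).rightSingularVectors)) / 2 := trace_transpose_mul_le _ _
    _ ≤ (frobSq Aᵀ + frobSq Bᵀ) / 2 := by
        gcongr
        · exact frobSq_mul_le_of_mul_transpose_mul_self
            (A * Bᵀ).leftSingularVectors_mul_transpose_mul_self _
        · exact frobSq_mul_le_of_mul_transpose_mul_self hV _
    _ = (frobSq A + frobSq B) / 2 := by rw [frobSq_transpose, frobSq_transpose]

/-- `A = U Σ^½ P` and `B = V Σ^½ P`, where `P` sends the at most `r` directions with nonzero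
singular value injectively to the `r` columns. -/
lemma exists_balanced_factorization_of_rank_le {m n r : ℕ} (Z : Matrix (Fin m) (Fin n) ℝ)
    (hZ : Z.rank ≤ r) :
    ∃ (A : Matrix (Fin m) (Fin r) ℝ) (B : Matrix (Fin n) (Fin r) ℝ),
      A * Bᵀ = Z ∧ frobSq A = nuclearNorm Z ∧ frobSq B = nuclearNorm Z := by
  obtain ⟨P, hP⟩ := exists_mul_transpose_eq_diagonal_ite (R := ℝ) (κ := Fin r)
    (Z.singularValue · ≠ 0) (by rw [card_singularValue_ne_zero, Fintype.card_fin]; exact hZ)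
  have hsqrt (i : Fin n) : √(Z.singularValue i) ^ 2 = Z.singularValue i :=
    Real.sq_sqrt (Z.singularValue_nonneg i)
  refine ⟨Z.leftSingularVectors * diagonal (fun i => √(Z.singularValue i)) * P,
    Z.rightSingularVectors * diagonal (fun i => √(Z.singularValue i)) * P, ?_, ?_, ?_⟩
  · refine Eq.trans ?_ Z.leftSingularVectors_mul_diagonal_mul_transpose
    simp only [transpose_mul, diagonal_transpose, Matrix.mul_assoc]
    rw [← Matrix.mul_assoc P, hP, ← Matrix.mul_assoc (diagonal _) (diagonal _),
      diagonal_mul_diagonal, ← Matrix.mul_assoc (diagonal _) (diagonal _), diagonal_mul_diagonal]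
    congr 3
    funext i
    by_cases h : Z.singularValue i = 0
    · simp [h]
    · simp [h, ← sq, hsqrt]
  · rw [frobSq_mul_diagonal_mul Z.transpose_leftSingularVectors_mul_self hP,
      nuclearNorm_eq_sum_singularValue]
    refine Finset.sum_congr rfl fun i _ => ?_
    by_cases h : Z.singularValue i = 0
    · simp [h]
    · simp [h, hsqrt]
  · rw [frobSq_mul_diagonal_mul (c := fun _ => 1)
      (by rw [diagonal_one]; exact Z.transpose_rightSingularVectors_mul) hP,
      nuclearNorm_eq_sum_singularValue]
    refine Finset.sum_congr rfl fun i _ => ?_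
    by_cases h : Z.singularValue i = 0
    · simp [h]
    · simp [h, hsqrt]

theorem inf_factorization_eq_inf_rank_restricted_general {m n r : ℕ}
    (X : Matrix (Fin m) (Fin n) ℝ) (lam : ℝ) (hlam : 0 ≤ lam) :
    sInf {c : ℝ | ∃ A : Matrix (Fin m) (Fin r) ℝ, ∃ B : Matrix (Fin n) (Fin r) ℝ,
        c = (1 / 2) * frobSq (X - A * Bᵀ) + (lam / 2) * (frobSq A + frobSq B)} =
    sInf {c : ℝ | ∃ Z : Matrix (Fin m) (Fin n) ℝ, Z.rank ≤ r ∧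
        c = (1 / 2) * frobSq (X - Z) + lam * nuclearNorm Z} := by
  refine csInf_eq_csInf_of_forall_exists_le ?_ ?_
  · rintro _ ⟨A, B, rfl⟩
    refine ⟨_, ⟨A * Bᵀ, (rank_mul_le_left A Bᵀ).trans (rank_le_width A), rfl⟩, ?_⟩
    have hnuc := mul_le_mul_of_nonneg_left (nuclearNorm_mul_transpose_le A B) hlam
    linarith
  · rintro _ ⟨Z, hZ, rfl⟩
    obtain ⟨A, B, hAB, hA, hB⟩ := exists_balanced_factorization_of_rank_le Z hZ
    exact ⟨_, ⟨A, B, rfl⟩, by rw [hAB, hA, hB]; linarith⟩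

theorem inf_factorization_eq_inf_rank_restricted {m n r : ℕ} (hr0 : 0 < r)
    (hr : r ≤ min m n) (X : Matrix (Fin m) (Fin n) ℝ) (lam : ℝ) (hlam : 0 ≤ lam) :
    sInf {c : ℝ | ∃ A : Matrix (Fin m) (Fin r) ℝ, ∃ B : Matrix (Fin n) (Fin r) ℝ,
        c = (1 / 2) * frobSq (X - A * Bᵀ) + (lam / 2) * (frobSq A + frobSq B)} =
    sInf {c : ℝ | ∃ Z : Matrix (Fin m) (Fin n) ℝ, Z.rank ≤ r ∧
        c = (1 / 2) * frobSq (X - Z) + lam * nuclearNorm Z} :=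
  inf_factorization_eq_inf_rank_restricted_general X lam hlam

end
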